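/- arXiv:1407.7634 — 8 statements merged into one kernel-verified Lean document; each statement's English description precedes it below -/
import Mathlib

section
/- Let H : X × ℝ≥0 → ℝ be continuous and, for each x, convex and nondecreasing in p. Define L(x,v) = sup_{p ≥ 0}(p v − H(x,p)). Then the double Legendre transform recovers H: for all (x,p) ∈ X × ℝ≥0, H(x,p) = sup_{v ≥ 0}(p v − L(x,v)). -/
open Set

/-- ε-subgradient existence for a convex, monotone, continuous function on `[0,∞)`. -/
lemma eps_subgrad (f : ℝ → ℝ) (hconv : ConvexOn ℝ (Ici 0) f)
    (hmono : MonotoneOn f (Ici 0)) (hcont : ContinuousOn f (Ici 0))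
    (p : ℝ) (hp : 0 ≤ p) (ε : ℝ) (hε : 0 < ε) :
    ∃ v : ℝ, 0 ≤ v ∧ ∀ q, 0 ≤ q → q * v - f q ≤ p * v - f p + ε := by
  rcases eq_or_lt_of_le hp with hp0 | hp0
  · refine ⟨0, le_rfl, fun q hq => ?_⟩
    have := hmono (le_refl (0:ℝ)) hq hq
    rw [← hp0]
    simp only [mul_zero]
    linarith [hmono (le_refl (0:ℝ)) hq hq]
  · -- p > 0; use continuity to get p' close to p
    have hcw : ContinuousWithinAt f (Ici 0) p := hcont p (le_of_lt hp0)
    rw [Metric.continuousWithinAt_iff] at hcw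
    obtain ⟨δ, hδ, hδ'⟩ := hcw ε hε
    set m := min (δ / 2) (p / 2) with hm
    have hm0 : 0 < m := lt_min (by linarith) (by linarith)
    have hmp : m ≤ p / 2 := min_le_right _ _
    set p' := p - m with hp'
    have hp'0 : 0 < p' := by simp only [hp']; linarith
    have hp'p : p' < p := by simp only [hp']; linarith
    have hdist : dist p' p < δ := by
      rw [Real.dist_eq, abs_of_nonpos (by simp [hp']; linarith)]
      simp only [hp']
      have : m ≤ δ / 2 := min_le_left _ _
      linarith
    have hfp' : |f p' - f p| < ε := by
      have := hδ' (le_of_lt hp'0) hdist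
      rwa [Real.dist_eq] at this
    have hfp'le : f p - ε ≤ f p' := by
      rcases abs_lt.mp hfp' with ⟨h1, h2⟩; linarith
    set v := (f p - f p') / (p - p') with hv
    have hden : 0 < p - p' := by linarith
    have hv0 : 0 ≤ v := by
      apply div_nonneg _ (le_of_lt hden)
      have := hmono (le_of_lt hp'0) (le_of_lt hp0) (le_of_lt hp'p)
      linarith
    refine ⟨v, hv0, fun q hq => ?_⟩
    -- need : f q ≥ f p - ε + v * (q - p), i.e. q*v - f q ≤ p*v - f p + ε
    rcases lt_trichotomy q p' with hq1 | hq1 | hq1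
    · -- q < p' < p : slope f q p' ≤ slope f p' p = v
      have hs := hconv.slope_mono_adjacent hq (le_of_lt hp0) hq1 hp'p
      have hden2 : 0 < p' - q := by linarith
      have hveq : v * (p - p') = f p - f p' := by rw [hv, div_mul_cancel₀ _ (ne_of_gt hden)]
      have hkey : f p' - f q ≤ v * (p' - q) := by
        rw [hv, div_mul_eq_mul_div, le_div_iff₀ hden]
        rw [div_le_div_iff₀ hden2 hden] at hs
        nlinarith
      nlinarith
    · have hveq : v * (p - p') = f p - f p' := by rw [hv, div_mul_cancel₀ _ (ne_of_gt hden)]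
      rw [hq1]
      nlinarith [hveq, hε]
    · rcases lt_trichotomy q p with hq2 | hq2 | hq2
      · -- p' < q < p : f q ≥ f p' ≥ f p - ε, and v*(q-p) ≤ 0
        have h1 : f p' ≤ f q := hmono (le_of_lt hp'0) hq (le_of_lt hq1)
        have h2 : v * (q - p) ≤ 0 :=
          mul_nonpos_of_nonneg_of_nonpos hv0 (by linarith)
        nlinarith
      · subst hq2; linarith
      · -- q > p : slope f p' p ≤ slope f p q
        have hs := hconv.slope_mono_adjacent (le_of_lt hp'0) hq hp'p hq2
        have hden2 : 0 < q - p := by linarith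
        rw [← hv] at hs
        have hkey : v * (q - p) ≤ f q - f p := (le_div_iff₀ hden2).mp hs
        nlinarith

/-- Under (A1),(A2) the double Legendre transform recovers `H`:
for all `x` and `p ≥ 0`, `H(x,p) = sup_{v ≥ 0} (p v − L(x,v))`, where
`L(x,v) = sup_{p ≥ 0} (p v − H(x,p))` (values in `EReal`). -/
theorem stmt1 {X : Type*} [MetricSpace X] (H : X → ℝ → ℝ)
    (hH_cont : ContinuousOn (fun q : X × ℝ => H q.1 q.2) (univ ×ˢ Ici 0))
    (hH_conv : ∀ x, ConvexOn ℝ (Ici 0) (H x))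
    (hH_mono : ∀ x, MonotoneOn (H x) (Ici 0))
    (L : X → ℝ → EReal)
    (hL : ∀ x v, L x v = ⨆ p : Ici (0:ℝ), ((p.1 * v - H x p.1 : ℝ) : EReal)) :
    ∀ x, ∀ p ∈ Ici (0:ℝ),
      (H x p : EReal) = ⨆ v : Ici (0:ℝ), (((p * v.1 : ℝ) : EReal) - L x v.1) := by
  intro x p hp
  have hcontx : ContinuousOn (H x) (Ici 0) := by
    have : ContinuousOn (fun r : ℝ => (x, r)) (Ici 0) :=
      (continuous_const.prodMk continuous_id).continuousOn
    exact hH_cont.comp this (fun r hr => ⟨mem_univ _, hr⟩)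
  apply le_antisymm
  · -- lower bound : H x p ≤ sup
    apply le_of_forall_lt
    intro c hc
    rcases EReal.lt_iff_exists_real_btwn.mp hc with ⟨r, hcr, hr⟩
    have hrp : r < H x p := by exact_mod_cast hr
    refine lt_of_lt_of_le hcr ?_
    set ε := H x p - r with hε
    have hε0 : 0 < ε := by linarith
    obtain ⟨v, hv0, hvsub⟩ := eps_subgrad (H x) (hH_conv x) (hH_mono x) hcontx p hp ε hε0
    have hLle : L x v ≤ ((p * v - H x p + ε : ℝ) : EReal) := by
      rw [hL]
      apply iSup_le
      rintro ⟨q, hq⟩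
      exact_mod_cast hvsub q hq
    have h1 : ((r : ℝ) : EReal) ≤ ((p * v : ℝ) : EReal) - L x v := by
      calc ((r : ℝ) : EReal) = ((p * v : ℝ) : EReal) - ((p * v - H x p + ε : ℝ) : EReal) := by
            rw [← EReal.coe_sub, EReal.coe_eq_coe_iff]; simp only [hε]; ring
        _ ≤ ((p * v : ℝ) : EReal) - L x v := EReal.sub_le_sub le_rfl hLle
    exact h1.trans (le_iSup (fun w : Ici (0:ℝ) => ((p * w.1 : ℝ) : EReal) - L x w.1) ⟨v, hv0⟩)
  · -- upper bound
    apply iSup_le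
    rintro ⟨v, hv⟩
    have hLge : ((p * v - H x p : ℝ) : EReal) ≤ L x v := by
      rw [hL]
      exact le_iSup (fun q : Ici (0:ℝ) => ((q.1 * v - H x q.1 : ℝ) : EReal)) ⟨p, hp⟩
    calc ((p * v : ℝ) : EReal) - L x v
        ≤ ((p * v : ℝ) : EReal) - ((p * v - H x p : ℝ) : EReal) :=
          EReal.sub_le_sub le_rfl hLge
      _ = ((H x p : ℝ) : EReal) := by rw [← EReal.coe_sub, EReal.coe_eq_coe_iff]; ring
end

section
/- Let H : X × ℝ≥0 → ℝ be continuous, convex and nondecreasing in p for each x, and let L(x,v) = sup_{p ≥ 0}(p v − H(x,p)). Then for all x ∈ X and p ∈ ℝ, H(x,|p|) = sup_{v ∈ ℝ}(p v − L(x,|v|)). -/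
open Set

/-- A convex, monotone function on `Ici 0` has a nonnegative subgradient at every point. -/
lemma exists_nonneg_subgrad (f : ℝ → ℝ) (hconv : ConvexOn ℝ (Ici 0) f)
    (hmono : MonotoneOn f (Ici 0)) {a : ℝ} (ha : 0 ≤ a) :
    ∃ v : ℝ, 0 ≤ v ∧ ∀ q ∈ Ici (0:ℝ), f a + v * (q - a) ≤ f q := by
  set T : Set ℝ := (fun q => (f q - f a) / (q - a)) '' Ioi a with hT
  have hne : T.Nonempty := ⟨_, ⟨a + 1, by simp, rfl⟩⟩
  have hlb : ∀ t ∈ T, (0:ℝ) ≤ t := by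
    rintro t ⟨q, hq, rfl⟩
    have hq' : a < q := hq
    have hfa : f a ≤ f q := hmono ha (le_trans ha hq'.le) hq'.le
    exact div_nonneg (by linarith) (by linarith)
  have hbdd : BddBelow T := ⟨0, fun t ht => hlb t ht⟩
  refine ⟨sInf T, le_csInf hne hlb, ?_⟩
  intro q hq
  rcases lt_trichotomy q a with h | h | h
  · -- q < a : the slope (f a - f q)/(a - q) is a lower bound of T
    have hlb2 : ∀ t ∈ T, (f a - f q) / (a - q) ≤ t := by
      rintro t ⟨r, hr, rfl⟩
      exact hconv.slope_mono_adjacent hq (le_trans ha (le_of_lt hr)) h hr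
    have h1 : (f a - f q) / (a - q) ≤ sInf T := le_csInf hne hlb2
    have h2 : (f a - f q) / (a - q) * (a - q) ≤ sInf T * (a - q) :=
      mul_le_mul_of_nonneg_right h1 (by linarith)
    rw [div_mul_cancel₀ _ (by linarith : a - q ≠ 0)] at h2
    nlinarith
  · simp [h]
  · -- a < q
    have h1 : sInf T ≤ (f q - f a) / (q - a) := csInf_le hbdd ⟨q, h, rfl⟩
    have h2 : sInf T * (q - a) ≤ (f q - f a) / (q - a) * (q - a) :=
      mul_le_mul_of_nonneg_right h1 (by linarith)
    rw [div_mul_cancel₀ _ (by linarith : q - a ≠ 0)] at h2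
    nlinarith

/-- Under (A1),(A2), for all `x ∈ X` and `p ∈ ℝ`,
`H(x,|p|) = sup_{v ∈ ℝ} (p v − L(x,|v|))`, where `L(x,v) = sup_{p ≥ 0}(p v − H(x,p))`. -/
theorem stmt2 {X : Type*} [MetricSpace X] (H : X → ℝ → ℝ)
    (hH_cont : ContinuousOn (fun q : X × ℝ => H q.1 q.2) (univ ×ˢ Ici 0))
    (hH_conv : ∀ x, ConvexOn ℝ (Ici 0) (H x))
    (hH_mono : ∀ x, MonotoneOn (H x) (Ici 0))
    (L : X → ℝ → EReal)
    (hL : ∀ x v, L x v = ⨆ p : Ici (0:ℝ), ((p.1 * v - H x p.1 : ℝ) : EReal)) :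
    ∀ (x : X) (p : ℝ),
      (H x |p| : EReal) = ⨆ v : ℝ, (((p * v : ℝ) : EReal) - L x |v|) := by
  intro x p
  set a : ℝ := |p| with ha_def
  have ha : (0:ℝ) ≤ a := abs_nonneg p
  obtain ⟨v₀, hv₀, hsub⟩ := exists_nonneg_subgrad (H x) (hH_conv x) (hH_mono x) ha
  apply le_antisymm
  · -- lower bound : use the subgradient
    have hLle : L x v₀ ≤ ((a * v₀ - H x a : ℝ) : EReal) := by
      rw [hL]
      apply iSup_le
      rintro ⟨q, hq⟩
      rw [EReal.coe_le_coe_iff]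
      have h := hsub q hq
      nlinarith
    set v : ℝ := if 0 ≤ p then v₀ else -v₀ with hv_def
    have habs : |v| = v₀ := by
      by_cases h : 0 ≤ p <;> simp [hv_def, h, abs_of_nonneg hv₀]
    have hpv : p * v = a * v₀ := by
      by_cases h : 0 ≤ p
      · simp [hv_def, h, ha_def, abs_of_nonneg h]
      · push_neg at h
        simp only [hv_def, if_neg (not_le.mpr h), ha_def, abs_of_neg h]
        ring
    calc (H x a : EReal)
        = ((a * v₀ : ℝ) : EReal) - ((a * v₀ - H x a : ℝ) : EReal) := by
          rw [← EReal.coe_sub, EReal.coe_eq_coe_iff]; ring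
      _ ≤ ((a * v₀ : ℝ) : EReal) - L x v₀ := EReal.sub_le_sub le_rfl hLle
      _ = ((p * v : ℝ) : EReal) - L x |v| := by rw [hpv, habs]
      _ ≤ ⨆ w : ℝ, (((p * w : ℝ) : EReal) - L x |w|) :=
          le_iSup (fun w : ℝ => (((p * w : ℝ) : EReal) - L x |w|)) v
  · -- upper bound : Fenchel inequality
    apply iSup_le
    intro v
    have h1 : ((a * |v| - H x a : ℝ) : EReal) ≤ L x |v| := by
      rw [hL]
      exact le_iSup (fun q : Ici (0:ℝ) => ((q.1 * |v| - H x q.1 : ℝ) : EReal)) ⟨a, ha⟩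
    calc ((p * v : ℝ) : EReal) - L x |v|
        ≤ ((p * v : ℝ) : EReal) - ((a * |v| - H x a : ℝ) : EReal) :=
          EReal.sub_le_sub le_rfl h1
      _ = ((p * v - (a * |v| - H x a) : ℝ) : EReal) := by norm_cast
      _ ≤ (H x a : EReal) := by
          rw [EReal.coe_le_coe_iff]
          have : p * v ≤ a * |v| := by
            rw [ha_def, ← abs_mul]; exact le_abs_self _
          linarith
end

section
/- Let ℓ : ℝ → ℝ be continuous on [0,h] (h > 0) and suppose that for every r ∈ [0,h) and every C¹ function φ defined on a right neighborhood of r that is a right supertangent of ℓ at r (i.e. ℓ − φ attains a local max over [r, r+δ) at r), one has φ'(r+0) ≥ 0. Then ℓ(0) ≤ ℓ(h). -/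
open Set

/-- Let `ℓ` be continuous on `[0,h]` (`h > 0`) and suppose that for every
`r ∈ [0,h)` and every `C¹` right supertangent `φ` of `ℓ` at `r` (i.e. `ℓ − φ` attains a
maximum over `[r, r+δ) ∩ [0,h]` at `r`), the right derivative satisfies `φ'(r+0) ≥ 0`.
Then `ℓ(0) ≤ ℓ(h)`. -/
theorem stmt7 (h : ℝ) (hh : 0 < h) (ℓ : ℝ → ℝ)
    (hcont : ContinuousOn ℓ (Icc 0 h))
    (hsuper : ∀ r ∈ Ico (0:ℝ) h, ∀ φ : ℝ → ℝ, ∀ δ > (0:ℝ),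
      ContDiffOn ℝ 1 φ (Ico r (r + δ)) →
      (∀ s ∈ Ico r (r + δ) ∩ Icc 0 h, ℓ s - φ s ≤ ℓ r - φ r) →
      0 ≤ derivWithin φ (Ici r) r) :
    ℓ 0 ≤ ℓ h := by
  by_contra hlt
  push_neg at hlt
  set c : ℝ := ℓ 0 - ℓ h with hc
  have hcpos : 0 < c := by simp [hc]; linarith
  set a : ℝ := c / (2 * h) with ha
  have hapos : 0 < a := by positivity
  set f : ℝ → ℝ := fun s => ℓ s + a * s with hf
  have hfc : ContinuousOn f (Icc 0 h) :=
    hcont.add ((continuous_const.mul continuous_id).continuousOn)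
  obtain ⟨r, hr, hmax⟩ := (isCompact_Icc (a := (0:ℝ)) (b := h)).exists_isMaxOn
    (nonempty_Icc.2 hh.le) hfc
  have hrh : r ≠ h := by
    intro hrh
    have h0 : f 0 ≤ f r := hmax (by constructor <;> [rfl; exact hh.le])
    have : f h = ℓ h + a * h := rfl
    have hah : a * h = c / 2 := by
      field_simp [ha]
      rw [ha, div_mul_eq_mul_div, div_mul_eq_mul_div, div_eq_iff (by positivity)]; ring
    rw [hrh] at h0
    simp only [hf] at h0
    rw [hah] at h0
    simp at h0
    linarith
  have hrmem : r ∈ Ico (0:ℝ) h := ⟨hr.1, lt_of_le_of_ne hr.2 hrh⟩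
  have key := hsuper r hrmem (fun s => -a * s) 1 one_pos
    (by
      apply ContDiffOn.mul contDiffOn_const contDiffOn_id)
    (by
      intro s hs
      have := hmax hs.2
      simp only [hf, mem_setOf_eq] at this
      simp only [neg_mul]
      linarith)
  have hderiv : derivWithin (fun s => -a * s) (Ici r) r = -a := by
    have : HasDerivWithinAt (fun s => -a * s) (-a) (Ici r) r := by
      simpa using ((hasDerivAt_id r).const_mul (-a)).hasDerivWithinAt
    exact this.derivWithin (uniqueDiffOn_Ici r r self_mem_Ici)
  rw [hderiv] at key
  linarith
end

section
/- Let ℓ : [0,h] → ℝ be continuous and suppose that for every r ∈ [0,h), every element of the right subdifferential D^{−,r}ℓ(r) is nonpositive. Then ℓ(0) ≥ ℓ(h). -/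
open Set

/-- Let `ℓ : [0,h] → ℝ` be continuous and suppose that for every
`r ∈ [0,h)`, every element of the right subdifferential `D^{−,r}ℓ(r)` (right derivatives of
`C¹` right subtangents, i.e. `φ` with `ℓ − φ` minimal over `[r,r+δ) ∩ [0,h]` at `r`) is
nonpositive.  Then `ℓ(0) ≥ ℓ(h)`. -/
theorem stmt8 (h : ℝ) (hh : 0 < h) (ℓ : ℝ → ℝ)
    (hcont : ContinuousOn ℓ (Icc 0 h))
    (hsub : ∀ r ∈ Ico (0:ℝ) h, ∀ φ : ℝ → ℝ, ∀ δ > (0:ℝ),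
      ContDiffOn ℝ 1 φ (Ico r (r + δ)) →
      (∀ s ∈ Ico r (r + δ) ∩ Icc 0 h, ℓ r - φ r ≤ ℓ s - φ s) →
      derivWithin φ (Ici r) r ≤ 0) :
    ℓ h ≤ ℓ 0 := by
  by_contra hlt
  push_neg at hlt
  set ε : ℝ := (ℓ h - ℓ 0) / (2 * h) with hε
  have hεpos : 0 < ε := div_pos (by linarith) (by linarith)
  set g : ℝ → ℝ := fun s => ℓ s - ε * s with hg
  have hgc : ContinuousOn g (Icc 0 h) :=
    hcont.sub ((continuous_const.mul continuous_id).continuousOn)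
  obtain ⟨r, hrmem, hrmin⟩ :=
    isCompact_Icc.exists_isMinOn ⟨0, left_mem_Icc.2 hh.le⟩ hgc
  have h0h : (0:ℝ) ∈ Icc 0 h := left_mem_Icc.2 hh.le
  have hgh : g 0 < g h := by
    simp only [hg]
    have : ε * h = (ℓ h - ℓ 0) / 2 := by
      field_simp [hε]
      rw [hε, div_mul_eq_mul_div, div_mul_eq_mul_div, div_eq_iff (mul_pos two_pos hh).ne']; ring
    rw [mul_zero]
    linarith
  have hrh : r < h := by
    rcases lt_or_eq_of_le hrmem.2 with h' | h'
    · exact h'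
    · exfalso
      have := hrmin h0h
      rw [h'] at this
      exact absurd this (not_le.2 hgh)
  have key := hsub r ⟨hrmem.1, hrh⟩ (fun s => ε * s) 1 one_pos
    ((contDiff_const.mul contDiff_id).contDiffOn)
    (fun s hs => by
      have := hrmin hs.2
      simpa [hg] using this)
  have hderiv : derivWithin (fun s => ε * s) (Ici r) r = ε := by
    have : HasDerivWithinAt (fun s => ε * s) ε (Ici r) r := by
      simpa using ((hasDerivAt_id r).const_mul ε).hasDerivWithinAt (s := Ici r)
    exact this.derivWithin (uniqueDiffOn_Ici r r Set.self_mem_Ici)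
  rw [hderiv] at key
  linarith
end

section
/- Let w : [0,t) → ℝ be continuous and g : [0,t) → ℝ be piecewise continuous, and suppose that for every h ∈ [0,t) and every p in the right superdifferential D^{+,r}w(h), one has −p ≤ g(h). Then w(0) ≤ ∫₀^h g(r) dr + w(h) for all h ∈ [0,t). -/
open Set

/-- `g` is piecewise continuous on `[a,b)`: there is a finite partition
`a = r 0 < r 1 < ⋯ < r (n+1) = b` such that on each piece `[r i, r (i+1))` the function `g`
agrees with a function continuous on the closed piece. -/
def PwContOn (g : ℝ → ℝ) (a b : ℝ) : Prop :=
  ∃ (n : ℕ) (r : ℕ → ℝ), r 0 = a ∧ r (n + 1) = b ∧ (∀ i ≤ n, r i < r (i + 1)) ∧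
    ∀ i ≤ n, ∃ G : ℝ → ℝ, ContinuousOn G (Icc (r i) (r (i + 1))) ∧
      EqOn g G (Ico (r i) (r (i + 1)))

/-- Let `w : [0,t) → ℝ` be continuous and `g : [0,t) → ℝ` piecewise
continuous, and suppose that for every `h ∈ [0,t)` every element `p` of the right
superdifferential `D^{+,r}w(h)` satisfies `−p ≤ g(h)`.  Then
`w(0) ≤ ∫₀^h g(r) dr + w(h)` for all `h ∈ [0,t)`. -/
theorem stmt9 (t : ℝ) (ht : 0 < t) (w g : ℝ → ℝ)
    (hw : ContinuousOn w (Ico 0 t)) (hg : PwContOn g 0 t)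
    (hsub : ∀ h ∈ Ico (0:ℝ) t, ∀ φ : ℝ → ℝ, ∀ δ > (0:ℝ),
      ContDiffOn ℝ 1 φ (Ico h (h + δ)) →
      (∀ s ∈ Ico h (h + δ) ∩ Ico 0 t, w s - φ s ≤ w h - φ h) →
      -(derivWithin φ (Ici h) h) ≤ g h) :
    ∀ h ∈ Ico (0:ℝ) t, w 0 ≤ (∫ r in (0:ℝ)..h, g r) + w h := by
  obtain ⟨n, r, hr0, hrN, hrlt, hpc⟩ := hg
  -- integrability on each piece
  have hintpiece : ∀ k ≤ n, IntervalIntegrable g MeasureTheory.volume (r k) (r (k + 1)) := by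
    intro k hk
    obtain ⟨Gi, hGic, hGie⟩ := hpc k hk
    have hle := (hrlt k hk).le
    have h1 : IntervalIntegrable Gi MeasureTheory.volume (r k) (r (k + 1)) := by
      apply ContinuousOn.intervalIntegrable
      rwa [uIcc_of_le hle]
    refine h1.congr_ae ?_
    have hres : MeasureTheory.volume.restrict (Set.uIoc (r k) (r (k + 1)))
        = MeasureTheory.volume.restrict (Ico (r k) (r (k + 1))) := by
      rw [uIoc_of_le hle]
      exact MeasureTheory.Measure.restrict_congr_set
        (MeasureTheory.Ioc_ae_eq_Icc.trans MeasureTheory.Ico_ae_eq_Icc.symm)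
    rw [hres]
    exact (MeasureTheory.ae_restrict_iff' measurableSet_Ico).2
      (Filter.Eventually.of_forall fun x hx => (hGie hx).symm)
  -- global integrability
  have hint : IntervalIntegrable g MeasureTheory.volume 0 t := by
    have := IntervalIntegrable.trans_iterate (a := r) (n := n + 1)
      (μ := MeasureTheory.volume) (f := g) (fun k hk => hintpiece k (Nat.lt_succ_iff.1 hk))
    rwa [hr0, hrN] at this
  have hintsub : ∀ a b : ℝ, a ∈ Icc 0 t → b ∈ Icc 0 t →
      IntervalIntegrable g MeasureTheory.volume a b := by
    intro a b ha hb
    refine hint.mono_set ?_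
    exact uIcc_subset_uIcc (by rw [uIcc_of_le ht.le]; exact ha)
      (by rw [uIcc_of_le ht.le]; exact hb)
  -- the primitive
  set G : ℝ → ℝ := fun s => ∫ x in (0:ℝ)..s, g x with hGdef
  have hGcont : ContinuousOn G (Icc 0 t) := by
    have := intervalIntegral.continuousOn_primitive_interval'
      (μ := MeasureTheory.volume) (b₁ := (0:ℝ)) (b₂ := t) (a := (0:ℝ)) hint left_mem_uIcc
    rwa [uIcc_of_le ht.le] at this
  -- locating a point in a piece
  have hpiece : ∀ x : ℝ, 0 ≤ x → x < t → ∃ i ≤ n, x ∈ Ico (r i) (r (i + 1)) := by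
    intro x hx0 hxt
    set P : ℕ → Prop := fun k => r k ≤ x with hP
    have hP0 : P 0 := by rw [hP]; simpa [hr0] using hx0
    set i := Nat.findGreatest P n with hidef
    have hin : i ≤ n := Nat.findGreatest_le n
    have hri : r i ≤ x := Nat.findGreatest_spec (Nat.zero_le n) hP0
    refine ⟨i, hin, hri, ?_⟩
    rcases eq_or_lt_of_le hin with heq | hlt
    · by_contra hcon
      push_neg at hcon
      have : r (i + 1) ≤ x := hcon
      rw [heq] at this
      rw [hrN] at this
      exact absurd hxt (not_lt.2 this)
    · by_contra hcon
      push_neg at hcon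
      exact Nat.findGreatest_is_greatest (Nat.lt_succ_self i) (Nat.succ_le_of_lt hlt) hcon
  -- main statement
  intro h₀ hh₀
  obtain ⟨hh₀0, hh₀t⟩ := hh₀
  -- epsilon version
  have key : ∀ ε > (0:ℝ), w 0 ≤ G h₀ + w h₀ + ε * h₀ := by
    intro ε hε
    by_contra hneg
    push_neg at hneg
    set f : ℝ → ℝ := fun s => G s + w s + ε * s - w 0 with hfdef
    have hIccsub : Icc (0:ℝ) h₀ ⊆ Ico 0 t := fun x hx => ⟨hx.1, lt_of_le_of_lt hx.2 hh₀t⟩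
    have hIccsub' : Icc (0:ℝ) h₀ ⊆ Icc 0 t := fun x hx => ⟨hx.1, hx.2.trans hh₀t.le⟩
    have hfc : ContinuousOn f (Icc 0 h₀) := by
      refine ContinuousOn.sub ?_ continuousOn_const
      exact ((hGcont.mono hIccsub').add (hw.mono hIccsub)).add
        (continuousOn_const.mul continuousOn_id)
    have hfh₀ : f h₀ < 0 := by rw [hfdef]; simp only; linarith
    set B : Set ℝ := Icc 0 h₀ ∩ f ⁻¹' Ici 0 with hBdef
    have hBclosed : IsClosed B :=
      hfc.preimage_isClosed_of_isClosed isClosed_Icc isClosed_Ici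
    have hf0 : f 0 = 0 := by
      rw [hfdef]; simp [hGdef, intervalIntegral.integral_same]
    have hB0 : (0:ℝ) ∈ B := ⟨⟨le_refl 0, hh₀0⟩, by simp [hf0]⟩
    have hBbdd : BddAbove B := ⟨h₀, fun x hx => hx.1.2⟩
    set b := sSup B with hbdef
    have hbB : b ∈ B := hBclosed.csSup_mem ⟨0, hB0⟩ hBbdd
    have hb0 : 0 ≤ b := hbB.1.1
    have hbh₀ : b ≤ h₀ := hbB.1.2
    have hfb : 0 ≤ f b := hbB.2
    have hblt : b < h₀ := lt_of_le_of_ne hbh₀ (fun h => by rw [h] at hfb; linarith)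
    have hbt : b < t := lt_trans hblt hh₀t
    have hfneg : ∀ s, b < s → s ≤ h₀ → f s < 0 := by
      intro s hbs hsh₀
      by_contra hcon
      push_neg at hcon
      have : s ∈ B := ⟨⟨hb0.trans hbs.le, hsh₀⟩, hcon⟩
      exact absurd (le_csSup hBbdd this) (not_le.2 hbs)
    obtain ⟨i, hin, hbi⟩ := hpiece b hb0 hbt
    obtain ⟨Gi, hGic, hGie⟩ := hpc i hin
    have hrile := (hrlt i hin).le
    set δ := min (h₀ - b) (r (i + 1) - b) with hδdef
    have hδ : 0 < δ := lt_min (by linarith) (by linarith [hbi.2])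
    -- continuous extension of Gi
    set Gb : ℝ → ℝ := fun x => Gi (max (r i) (min x (r (i + 1)))) with hGbdef
    have hGbc : Continuous Gb := by
      refine hGic.comp_continuous
        (continuous_const.max (continuous_id.min continuous_const)) fun x => ?_
      exact ⟨le_max_left _ _, max_le hrile (min_le_right _ _)⟩
    have hGbg : ∀ x ∈ Ico (r i) (r (i + 1)), Gb x = g x := by
      intro x hx
      have : max (r i) (min x (r (i + 1))) = x := by
        rw [min_eq_left hx.2.le, max_eq_right hx.1]
      rw [hGbdef]; simp only [this]; exact (hGie hx).symm
    -- the supertangent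
    set φ : ℝ → ℝ := fun s => w b - ε * (s - b) - ∫ x in b..s, Gb x with hφdef
    have hφderiv : ∀ s, HasDerivAt φ (-ε - Gb s) s := by
      intro s
      have h1 : HasDerivAt (fun s : ℝ => w b - ε * (s - b)) (-ε) s := by
        have := (((hasDerivAt_id s).sub_const b).const_mul ε).const_sub (w b)
        simpa using this
      have h2 : HasDerivAt (fun u => ∫ x in b..u, Gb x) (Gb s) s :=
        (hGbc.integral_hasStrictDerivAt b s).hasDerivAt
      exact h1.sub h2
    have hφc1 : ContDiffOn ℝ 1 φ (Ico b (b + δ)) := by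
      have hd : deriv φ = fun s => -ε - Gb s := funext fun s => (hφderiv s).deriv
      have : ContDiff ℝ 1 φ := by
        rw [contDiff_one_iff_deriv]
        exact ⟨fun s => (hφderiv s).differentiableAt, by rw [hd]; exact continuous_const.sub hGbc⟩
      exact this.contDiffOn
    have hφb : φ b = w b := by rw [hφdef]; simp [intervalIntegral.integral_same]
    have hsup : ∀ s ∈ Ico b (b + δ) ∩ Ico 0 t, w s - φ s ≤ w b - φ b := by
      rintro s ⟨⟨hbs, hsδ⟩, hs0, hst⟩
      rcases eq_or_lt_of_le hbs with heq | hlt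
      · rw [← heq]
      · have hsh₀ : s < h₀ := lt_of_lt_of_le hsδ (by rw [hδdef]; linarith [min_le_left (h₀ - b) (r (i+1) - b)])
        have hsri : s < r (i + 1) := lt_of_lt_of_le hsδ (by rw [hδdef]; linarith [min_le_right (h₀ - b) (r (i+1) - b)])
        have hIGb : (∫ x in b..s, Gb x) = ∫ x in b..s, g x := by
          apply intervalIntegral.integral_congr
          intro x hx
          rw [uIcc_of_le hbs] at hx
          exact hGbg x ⟨hbi.1.trans hx.1, lt_of_le_of_lt hx.2 hsri⟩
        have hadd : (∫ x in (0:ℝ)..b, g x) + (∫ x in b..s, g x) = ∫ x in (0:ℝ)..s, g x :=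
          intervalIntegral.integral_add_adjacent_intervals
            (hintsub 0 b ⟨le_refl 0, ht.le⟩ ⟨hb0, hbt.le⟩)
            (hintsub b s ⟨hb0, hbt.le⟩ ⟨hs0, hst.le⟩)
        have hfs : f s < 0 := hfneg s hlt hsh₀.le
        have : w s - φ s = f s - f b := by
          rw [hφdef, hfdef]
          simp only
          rw [hIGb]
          have : G s - G b = ∫ x in b..s, g x := by rw [hGdef]; simp only; linarith [hadd]
          linarith [this]
        rw [this, hφb]
        simp only [sub_self]
        linarith
    have hφdw : derivWithin φ (Ici b) b = -ε - Gb b :=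
      ((hφderiv b).hasDerivWithinAt).derivWithin (uniqueDiffOn_Ici b b self_mem_Ici)
    have := hsub b ⟨hb0, hbt⟩ φ δ hδ hφc1 hsup
    rw [hφdw, hGbg b hbi] at this
    simp only [neg_sub, sub_neg_eq_add] at this
    linarith
  -- let ε → 0
  by_contra hcon
  push_neg at hcon
  have hd : 0 < (w 0 - (G h₀ + w h₀)) := by
    simp only [hGdef] at *
    linarith
  have hε : (0:ℝ) < (w 0 - (G h₀ + w h₀)) / (h₀ + 1) := by positivity
  have := key _ hε
  have hmul : (w 0 - (G h₀ + w h₀)) / (h₀ + 1) * h₀ < w 0 - (G h₀ + w h₀) := by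
    rw [div_mul_eq_mul_div, div_lt_iff₀ (by linarith)]
    have : 0 < w 0 - (G h₀ + w h₀) := hd
    nlinarith
  simp only [hGdef] at *
  linarith
end

section
/- Let w : [0,t) → ℝ be continuous and g : [0,t) → ℝ piecewise continuous, and suppose that for every h ∈ [0,t) and every p ∈ D^{−,r}w(h), one has −p ≥ g(h). Then w(0) ≥ ∫₀^h g(r) dr + w(h) for all h ∈ [0,t). -/
open Set

/-- Let `w : [0,t) → ℝ` be continuous and `g : [0,t) → ℝ` piecewise
continuous, and suppose that for every `h ∈ [0,t)` every element `p` of the right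
subdifferential `D^{−,r}w(h)` satisfies `−p ≥ g(h)`.  Then
`w(0) ≥ ∫₀^h g(r) dr + w(h)` for all `h ∈ [0,t)`. -/
theorem stmt10 (t : ℝ) (ht : 0 < t) (w g : ℝ → ℝ)
    (hw : ContinuousOn w (Ico 0 t)) (hg : PwContOn g 0 t)
    (hsup : ∀ h ∈ Ico (0:ℝ) t, ∀ φ : ℝ → ℝ, ∀ δ > (0:ℝ),
      ContDiffOn ℝ 1 φ (Ico h (h + δ)) →
      (∀ s ∈ Ico h (h + δ) ∩ Ico 0 t, w h - φ h ≤ w s - φ s) →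
      g h ≤ -(derivWithin φ (Ici h) h)) :
    ∀ h ∈ Ico (0:ℝ) t, (∫ r in (0:ℝ)..h, g r) + w h ≤ w 0 := by
  classical
  obtain ⟨n, r, hr0, hrn, hrlt, hG⟩ := hg
  -- every point of [0,t) lies in some piece
  have hpiece : ∀ x ∈ Ico (0:ℝ) t, ∃ i ≤ n, x ∈ Ico (r i) (r (i + 1)) := by
    intro x hx
    refine ⟨Nat.findGreatest (fun j => r j ≤ x) n, Nat.findGreatest_le n, ?_, ?_⟩
    · exact Nat.findGreatest_spec (P := fun j => r j ≤ x) (Nat.zero_le n) (show r 0 ≤ x by rw [hr0]; exact hx.1)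
    · set i := Nat.findGreatest (fun j => r j ≤ x) n with hi
      rcases eq_or_lt_of_le (show i ≤ n from Nat.findGreatest_le n) with hin | hin
      · rw [hin, hrn]; exact hx.2
      · have h1 : i + 1 ≤ n := Nat.succ_le_of_lt hin
        have h2 : ¬ r (i + 1) ≤ x :=
          Nat.findGreatest_is_greatest (Nat.lt_succ_self i) h1
        exact lt_of_not_ge h2
  -- integrability on each piece, hence on sub-intervals of [0,t)
  have hint : ∀ i ≤ n, MeasureTheory.IntegrableOn g (Ico (r i) (r (i + 1))) := by
    intro i hi
    obtain ⟨G, hGc, hGeq⟩ := hG i hi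
    exact ((hGc.integrableOn_Icc).mono_set Ico_subset_Icc_self).congr_fun
      hGeq.symm measurableSet_Ico
  have hintU : MeasureTheory.IntegrableOn g
      (⋃ i ∈ Finset.range (n + 1), Ico (r i) (r (i + 1))) := by
    rw [MeasureTheory.integrableOn_finset_iUnion]
    intro i hi
    exact hint i (Nat.lt_succ_iff.mp (Finset.mem_range.mp hi))
  have hsubU : Ico (0:ℝ) t ⊆ ⋃ i ∈ Finset.range (n + 1), Ico (r i) (r (i + 1)) := by
    intro x hx
    obtain ⟨i, hi, hxi⟩ := hpiece x hx
    exact mem_iUnion₂.mpr ⟨i, Finset.mem_range.mpr (Nat.lt_succ_of_le hi), hxi⟩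
  intro h hh
  rcases eq_or_lt_of_le hh.1 with hh0 | hh0
  · simp [← hh0]
  by_contra hcon
  push_neg at hcon
  have hIcc : MeasureTheory.IntegrableOn g (Icc (0:ℝ) h) :=
    hintU.mono_set (fun x hx => hsubU ⟨hx.1, lt_of_le_of_lt hx.2 hh.2⟩)
  have hII : ∀ a b : ℝ, a ∈ Icc (0:ℝ) h → b ∈ Icc (0:ℝ) h →
      IntervalIntegrable g MeasureTheory.volume a b := by
    intro a b ha hb
    rw [intervalIntegrable_iff]
    refine hIcc.mono_set ?_
    intro x hx
    rcases le_total a b with hab | hab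
    · rw [uIoc_of_le hab] at hx
      exact ⟨le_trans ha.1 hx.1.le, le_trans hx.2 hb.2⟩
    · rw [uIoc_of_ge hab] at hx
      exact ⟨le_trans hb.1 hx.1.le, le_trans hx.2 ha.2⟩
  set ε := ((∫ r in (0:ℝ)..h, g r) + w h - w 0) / h with hε
  have hεpos : 0 < ε := div_pos (by linarith) hh0
  have hεh : ε * h = (∫ r in (0:ℝ)..h, g r) + w h - w 0 := by
    rw [hε, div_mul_cancel₀]
    exact ne_of_gt hh0
  set u := fun s => w s + (∫ r in (0:ℝ)..s, g r) - ε * s with hu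
  have hIccsub : Icc (0:ℝ) h ⊆ Ico 0 t := fun x hx =>
    ⟨hx.1, lt_of_le_of_lt hx.2 hh.2⟩
  have hucont : ContinuousOn u (Icc 0 h) := by
    have h1 : ContinuousOn (fun s => ∫ r in (0:ℝ)..s, g r) (Icc 0 h) := by
      have := intervalIntegral.continuousOn_primitive_interval
        (a := 0) (b := h) (f := g) (μ := MeasureTheory.volume)
        (by rwa [uIcc_of_le hh0.le])
      rwa [uIcc_of_le hh0.le] at this
    exact ((hw.mono hIccsub).add h1).sub (continuous_const.mul continuous_id).continuousOn
  obtain ⟨c, hc, hcmin⟩ := isCompact_Icc.exists_isMinOn (nonempty_Icc.mpr hh0.le) hucont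
  have hu0 : u 0 = w 0 := by simp [hu]
  have huh : u h = w 0 := by
    simp only [hu]; rw [hεh]; ring
  -- get a minimizer strictly below h
  have hmin : ∃ c', c' ∈ Ico (0:ℝ) h ∧ ∀ s ∈ Icc (0:ℝ) h, u c' ≤ u s := by
    rcases lt_or_eq_of_le hc.2 with hch | hch
    · exact ⟨c, ⟨hc.1, hch⟩, fun s hs => hcmin hs⟩
    · refine ⟨0, ⟨le_refl _, hh0⟩, fun s hs => ?_⟩
      have := hcmin hs
      rw [hch, huh, ← hu0] at this
      exact this
  obtain ⟨c, hc, hcmin⟩ := hmin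
  obtain ⟨i, hi, hci⟩ := hpiece c (hIccsub ⟨hc.1, hc.2.le⟩)
  obtain ⟨G, hGc, hGeq⟩ := hG i hi
  -- clamped extension of G
  set G' : ℝ → ℝ := fun x => G (max (r i) (min x (r (i + 1)))) with hG'
  have hclamp : ∀ x, max (r i) (min x (r (i + 1))) ∈ Icc (r i) (r (i + 1)) := by
    intro x
    exact ⟨le_max_left _ _, max_le (le_of_lt (hrlt i hi)) (min_le_right _ _)⟩
  have hG'cont : Continuous G' :=
    hGc.comp_continuous (continuous_const.max (continuous_id.min continuous_const)) hclamp
  have hG'eq : ∀ x ∈ Icc (r i) (r (i + 1)), G' x = G x := by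
    intro x hx
    simp only [hG']
    rw [min_eq_left hx.2, max_eq_right hx.1]
  -- test function
  set F : ℝ → ℝ := fun s => ∫ x in c..s, G' x with hF
  have hFd : ∀ s, HasDerivAt F (G' s) s := by
    intro s
    exact intervalIntegral.integral_hasDerivAt_right
      (hG'cont.intervalIntegrable _ _)
      hG'cont.stronglyMeasurable.stronglyMeasurableAtFilter
      hG'cont.continuousAt
  set φ : ℝ → ℝ := fun s => ε * s - F s with hφ
  have hφd : ∀ s, HasDerivAt φ (ε - G' s) s := by
    intro s
    have h1 : HasDerivAt (fun s : ℝ => ε * s) ε s := by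
      simpa using (hasDerivAt_id s).const_mul ε
    exact h1.sub (hFd s)
  have hφC1 : ContDiff ℝ 1 φ := by
    rw [contDiff_one_iff_deriv]
    refine ⟨fun s => (hφd s).differentiableAt, ?_⟩
    have : deriv φ = fun s => ε - G' s := funext fun s => (hφd s).deriv
    rw [this]
    exact continuous_const.sub hG'cont
  set δ := min (h - c) (r (i + 1) - c) with hδ
  have hδpos : 0 < δ := lt_min (by linarith [hc.2]) (by linarith [hci.2])
  have hct : c ∈ Ico (0:ℝ) t := hIccsub ⟨hc.1, hc.2.le⟩
  have hsubt : ∀ s ∈ Ico c (c + δ) ∩ Ico 0 t, w c - φ c ≤ w s - φ s := by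
    intro s hs
    obtain ⟨⟨hcs, hsδ⟩, _⟩ := hs
    have hsh : s < h := lt_of_lt_of_le hsδ (by simp [hδ]; linarith [min_le_left (h - c) (r (i+1) - c)])
    have hsr : s < r (i + 1) := lt_of_lt_of_le hsδ (by simp [hδ]; linarith [min_le_right (h - c) (r (i+1) - c)])
    have hs0 : (0:ℝ) ≤ s := le_trans hc.1 hcs
    -- F s = ∫ c..s g
    have hFs : F s = ∫ x in c..s, g x := by
      refine (intervalIntegral.integral_congr ?_).symm
      intro x hx
      rw [uIcc_of_le hcs] at hx
      have hxmem : x ∈ Ico (r i) (r (i + 1)) :=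
        ⟨le_trans hci.1 hx.1, lt_of_le_of_lt hx.2 hsr⟩
      rw [hGeq hxmem, ← hG'eq x (Ico_subset_Icc_self hxmem)]
    have hadd : (∫ x in (0:ℝ)..c, g x) + (∫ x in c..s, g x) = ∫ x in (0:ℝ)..s, g x :=
      intervalIntegral.integral_add_adjacent_intervals
        (hII 0 c ⟨le_refl _, hh0.le⟩ ⟨hc.1, hc.2.le⟩)
        (hII c s ⟨hc.1, hc.2.le⟩ ⟨hs0, hsh.le⟩)
    have humin := hcmin s ⟨hs0, hsh.le⟩
    have hFc : F c = 0 := by simp [hF]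
    simp only [hu] at humin
    simp only [hφ, hFc, hFs]
    nlinarith [humin, hadd]
  have key := hsup c hct φ δ hδpos (hφC1.contDiffOn) hsubt
  have hder : derivWithin φ (Ici c) c = ε - G' c :=
    (hφd c).hasDerivWithinAt.derivWithin (uniqueDiffOn_Ici c c self_mem_Ici)
  rw [hder] at key
  have hGc' : G' c = g c := by
    rw [hG'eq c (Ico_subset_Icc_self hci), ← hGeq hci]
  rw [hGc'] at key
  linarith
end

section
/- Assume (A1)–(A6). Let u and v be arcwise continuous functions on X × [0,T) such that u satisfies the suboptimality principle (u(x,t) ≤ ∫₀^h L[ξ] dr + u(ξ(h),t−h) for all admissible ξ starting at x and all h ∈ [0,t)) and v satisfies the superoptimality principle (for each ε > 0 there exists an admissible ξ with v(x,t) ≥ ∫₀^h L[ξ] dr + v(ξ(h),t−h) − ε for all h ∈ [0,t)). Then sup_{X×(0,T)}(u − v) ≤ sup_{x ∈ X}(u(x,0) − v(x,0)). -/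
open Set Filter MeasureTheory Topology

/-- `m` is piecewise constant on `[0,∞)`: constant on each of finitely many half-open pieces
`[r i, r (i+1))` and on the final unbounded piece `[r n, ∞)`. -/
def PwConstIci (m : ℝ → ℝ) : Prop :=
  ∃ (n : ℕ) (r : ℕ → ℝ), r 0 = 0 ∧ (∀ i < n, r i < r (i + 1)) ∧
    (∀ i < n, ∀ x ∈ Ico (r i) (r (i + 1)), ∀ y ∈ Ico (r i) (r (i + 1)), m x = m y) ∧
    (∀ x ∈ Ici (r n), ∀ y ∈ Ici (r n), m x = m y)

/-- `g` is piecewise continuous on `[0,∞)`: on each of finitely many half-open pieces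
`[r i, r (i+1))` it agrees with a function continuous on the closed piece, and it is
continuous on the final unbounded piece `[r n, ∞)`. -/
def PwContIci (g : ℝ → ℝ) : Prop :=
  ∃ (n : ℕ) (r : ℕ → ℝ), r 0 = 0 ∧ (∀ i < n, r i < r (i + 1)) ∧
    (∀ i < n, ∃ G : ℝ → ℝ, ContinuousOn G (Icc (r i) (r (i + 1))) ∧
      EqOn g G (Ico (r i) (r (i + 1)))) ∧
    ContinuousOn g (Ici (r n))

/-- An admissible curve for the Lagrangian `L : X × ℝ≥0 → ℝ ∪ {∞}`: an absolutely continuous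
curve `ξ = curve` on `[0,∞)` whose metric derivative `speed = |ξ'|` is piecewise constant and
such that `cost = L[ξ] = L(ξ(·), |ξ'|(·))` is finite and piecewise continuous. -/
structure AdmissibleCurve (X : Type*) [MetricSpace X] (L : X → ℝ → EReal) where
  curve : ℝ → X
  speed : ℝ → ℝ
  cost : ℝ → ℝ
  speed_nonneg : ∀ r, 0 ≤ speed r
  speed_pw : PwConstIci speed
  metric_deriv : ∀ᵐ r ∂volume, 0 ≤ r →
    Tendsto (fun s => dist (curve s) (curve r) / |s - r|) (nhdsWithin r {r}ᶜ) (nhds (speed r))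
  abs_cont : ∀ a b : ℝ, 0 ≤ a → a ≤ b → dist (curve a) (curve b) ≤ ∫ r in a..b, speed r
  cost_eq : ∀ r, 0 ≤ r → (cost r : EReal) = L (curve r) (speed r)
  cost_pw : PwContIci cost

/-- The standing assumptions (A1)–(A6) of the paper: `H = H(x,p)` is continuous on
`X × ℝ≥0` (A1); convex and nondecreasing in `p` (A2); `c_H(p) = sup_x H(x,p) < ∞` (A3);
`inf_x H(x,0) > −∞` and `liminf_{p→∞} inf_x H(x,p)/p > 0` (A4); the Lagrangian
`L(x,v) = sup_{p≥0}(pv − H(x,p))` is continuous on `D_L = {L < ∞}` and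
`V_L(x) = sup{v ≥ 0 ∣ L(x,v) < ∞}` is lower semicontinuous (A5); and the initial datum
`u₀` is bounded and uniformly continuous (A6). `0 < T` is the time horizon. -/
structure HJSetup (X : Type*) [MetricSpace X] where
  H : X → ℝ → ℝ
  L : X → ℝ → EReal
  T : ℝ
  u₀ : X → ℝ
  cH : ℝ → ℝ
  hT : 0 < T
  hL : ∀ x v, 0 ≤ v → L x v = ⨆ p : Ici (0:ℝ), ((p.1 * v - H x p.1 : ℝ) : EReal)
  A1 : ContinuousOn (fun q : X × ℝ => H q.1 q.2) (univ ×ˢ Ici 0)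
  A2conv : ∀ x, ConvexOn ℝ (Ici 0) (H x)
  A2mono : ∀ x, MonotoneOn (H x) (Ici 0)
  A3 : ∀ p ∈ Ici (0:ℝ), IsLUB (range fun x => H x p) (cH p)
  A4a : BddBelow (range fun x => H x 0)
  A4b : 0 < Filter.atTop.liminf fun p : ℝ => ⨅ x : X, ((H x p / p : ℝ) : EReal)
  A5a : ContinuousOn (fun q : X × ℝ => L q.1 q.2) {q : X × ℝ | 0 ≤ q.2 ∧ L q.1 q.2 < ⊤}
  A5b : LowerSemicontinuous fun x => ⨆ v : {v : ℝ // 0 ≤ v ∧ L x v < ⊤}, ((v.1 : ℝ) : EReal)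
  A6a : ∃ M : ℝ, ∀ x, |u₀ x| ≤ M
  A6b : UniformContinuous u₀

variable {X : Type*} [MetricSpace X]

/-- `U` is the value function: `U(x,t) = sup_{ξ ∈ A_x(X)} (∫₀^t L[ξ] dr + u₀(ξ(t)))`. -/
def HJSetup.IsValueFun (S : HJSetup X) (U : X → ℝ → ℝ) : Prop :=
  ∀ x t, 0 ≤ t → t ≤ S.T →
    U x t = sSup {c : ℝ | ∃ ξ : AdmissibleCurve X S.L, ξ.curve 0 = x ∧
      c = (∫ r in (0:ℝ)..t, ξ.cost r) + S.u₀ (ξ.curve t)}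

/-- `ξ` is an absolutely continuous curve in `X` (with locally integrable metric speed). -/
def IsACCurve (ξ : ℝ → X) : Prop :=
  ∃ m : ℝ → ℝ, (∀ r, 0 ≤ m r) ∧ LocallyIntegrable m volume ∧
    ∀ a b : ℝ, a ≤ b → dist (ξ a) (ξ b) ≤ ∫ r in a..b, m r

/-- `u` is arcwise continuous on `X × [0,T)`: along every absolutely continuous curve `ξ`,
`(s,t) ↦ u(ξ(s),t)` is continuous on `ℝ × [0,T)`. -/
def ArcwiseContinuousOn (u : X → ℝ → ℝ) (T : ℝ) : Prop :=
  ∀ ξ : ℝ → X, IsACCurve ξ →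
    ContinuousOn (fun q : ℝ × ℝ => u (ξ q.1) q.2) (univ ×ˢ Ico 0 T)

/-- `u` satisfies the suboptimality principle. -/
def Suboptimal (S : HJSetup X) (u : X → ℝ → ℝ) : Prop :=
  ∀ x t, 0 < t → t < S.T → ∀ ξ : AdmissibleCurve X S.L, ξ.curve 0 = x →
    ∀ h, 0 ≤ h → h < t →
      u x t ≤ (∫ r in (0:ℝ)..h, ξ.cost r) + u (ξ.curve h) (t - h)

/-- `u` satisfies the superoptimality principle. -/
def Superoptimal (S : HJSetup X) (u : X → ℝ → ℝ) : Prop :=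
  ∀ x t, 0 < t → t < S.T → ∀ ε > (0:ℝ), ∃ ξ : AdmissibleCurve X S.L, ξ.curve 0 = x ∧
    ∀ h, 0 ≤ h → h < t →
      (∫ r in (0:ℝ)..h, ξ.cost r) + u (ξ.curve h) (t - h) - ε ≤ u x t


private lemma find_piece (n : ℕ) (r : ℕ → ℝ) (s : ℝ)
    (hmono : ∀ i < n, r i < r (i + 1)) (h0 : r 0 ≤ s) (hn : s < r n) :
    ∃ i < n, r i ≤ s ∧ s < r (i + 1) := by
  induction n with
  | zero => exact absurd (lt_of_le_of_lt h0 hn) (lt_irrefl _)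
  | succ n ih =>
    by_cases h : s < r n
    · obtain ⟨i, hi, h1, h2⟩ := ih (fun i hi => hmono i (Nat.lt_succ_of_lt hi)) h
      exact ⟨i, Nat.lt_succ_of_lt hi, h1, h2⟩
    · exact ⟨n, Nat.lt_succ_self n, not_lt.1 h, hn⟩

private lemma adm_isAC {X : Type*} [MetricSpace X] {L : X → ℝ → EReal}
    (ξ : AdmissibleCurve X L) : IsACCurve (fun s => ξ.curve (max s 0)) := by
  obtain ⟨n, r, h0, hlt, hpc, hpc'⟩ := ξ.speed_pw
  set C := (Finset.range (n + 1)).sup' ⟨0, Finset.mem_range.2 (Nat.succ_pos n)⟩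
    (fun i => ξ.speed (r i)) with hCdef
  have hCge : ∀ i ≤ n, ξ.speed (r i) ≤ C := fun i hi =>
    Finset.le_sup' (fun j => ξ.speed (r j)) (Finset.mem_range.2 (Nat.lt_succ_of_le hi))
  have hspeedle : ∀ s, 0 ≤ s → ξ.speed s ≤ C := by
    intro s hs
    rcases lt_or_ge s (r n) with h | h
    · obtain ⟨i, hi, h1, h2⟩ := find_piece n r s hlt (h0 ▸ hs) h
      calc ξ.speed s = ξ.speed (r i) :=
            hpc i hi s ⟨h1, h2⟩ (r i) ⟨le_refl _, hlt i hi⟩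
        _ ≤ C := hCge i hi.le
    · calc ξ.speed s = ξ.speed (r n) := hpc' s h (r n) self_mem_Ici
        _ ≤ C := hCge n le_rfl
  have hC0 : 0 ≤ C := le_trans (ξ.speed_nonneg (r 0)) (hCge 0 (Nat.zero_le n))
  refine ⟨fun _ => C, fun _ => hC0, locallyIntegrable_const C, ?_⟩
  intro a b hab
  have h1 : max a 0 ≤ max b 0 := max_le_max hab le_rfl
  have h2 : dist (ξ.curve (max a 0)) (ξ.curve (max b 0))
      ≤ ∫ s in (max a 0)..(max b 0), ξ.speed s :=
    ξ.abs_cont _ _ (le_max_right a 0) h1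
  have h3 : (∫ s in (max a 0)..(max b 0), ξ.speed s) ≤ C * (max b 0 - max a 0) := by
    by_cases hint : IntervalIntegrable ξ.speed volume (max a 0) (max b 0)
    · have := intervalIntegral.integral_mono_on h1 hint (intervalIntegrable_const)
        (fun s hs => hspeedle s (le_trans (le_max_right a 0) hs.1))
      simpa [smul_eq_mul, mul_comm] using this
    · rw [intervalIntegral.integral_undef hint]
      exact mul_nonneg hC0 (sub_nonneg.2 h1)
  have h4 : max b 0 - max a 0 ≤ b - a := by
    rcases le_total 0 a with ha | ha
    · rw [max_eq_left (le_trans ha hab), max_eq_left ha]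
    · rw [max_eq_right ha]
      rcases le_total 0 b with hb | hb
      · rw [max_eq_left hb]; linarith
      · rw [max_eq_right hb]; linarith
  rw [intervalIntegral.integral_const, smul_eq_mul]
  calc dist (ξ.curve (max a 0)) (ξ.curve (max b 0)) ≤ C * (max b 0 - max a 0) :=
        le_trans h2 h3
    _ ≤ C * (b - a) := mul_le_mul_of_nonneg_left h4 hC0
    _ = (b - a) * C := mul_comm _ _

/-- **comparison theorem.** Under (A1)–(A6), if `u` and `v` are arcwise
continuous on `X × [0,T)`, `u` satisfies the suboptimality principle and `v` the
superoptimality principle, then `sup_{X×(0,T)}(u − v) ≤ sup_{x∈X}(u(x,0) − v(x,0))`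
(stated: any upper bound `M` of `x ↦ u(x,0) − v(x,0)` bounds `u − v` on `X × (0,T)`). -/
theorem stmt15 (S : HJSetup X) (u v : X → ℝ → ℝ)
    (hu_cont : ArcwiseContinuousOn u S.T) (hv_cont : ArcwiseContinuousOn v S.T)
    (hu_sub : Suboptimal S u) (hv_sup : Superoptimal S v)
    (M : ℝ) (hM : ∀ y : X, u y 0 - v y 0 ≤ M) :
    ∀ (x : X) (t : ℝ), 0 < t → t < S.T → u x t - v x t ≤ M := by
  intro x t ht htT
  refine le_of_forall_pos_le_add ?_
  intro ε hε
  obtain ⟨ξ, hξ0, hξ⟩ := hv_sup x t ht htT ε hε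
  have key : ∀ h ∈ Ioo (0:ℝ) t, u x t - v x t - ε ≤
      u (ξ.curve (max h 0)) (t - h) - v (ξ.curve (max h 0)) (t - h) := by
    intro h hh
    rw [max_eq_left hh.1.le]
    have h1 := hu_sub x t ht htT ξ hξ0 h hh.1.le hh.2
    have h2 := hξ h hh.1.le hh.2
    linarith
  have hAC := adm_isAC ξ
  have hS : ((t, (0:ℝ)) : ℝ × ℝ) ∈ (univ ×ˢ Ico 0 S.T : Set (ℝ × ℝ)) :=
    ⟨mem_univ _, le_refl _, lt_trans ht htT⟩
  have hu' := (hu_cont _ hAC) (t, 0) hS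
  have hv' := (hv_cont _ hAC) (t, 0) hS
  have hφ : Tendsto (fun h : ℝ => ((h, t - h) : ℝ × ℝ)) (𝓝[Ioo 0 t] t)
      (𝓝[(univ ×ˢ Ico 0 S.T : Set (ℝ × ℝ))] (t, 0)) := by
    rw [tendsto_nhdsWithin_iff]
    constructor
    · have h1 : Tendsto (fun h : ℝ => ((h, t - h) : ℝ × ℝ)) (𝓝 t) (𝓝 (t, t - t)) :=
        (continuous_id.prodMk (continuous_const.sub continuous_id)).tendsto t
      simpa using h1.mono_left nhdsWithin_le_nhds
    · filter_upwards [self_mem_nhdsWithin] with h hh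
      refine ⟨mem_univ _, ?_, ?_⟩
      · show (0:ℝ) ≤ t - h; linarith [hh.2]
      · show t - h < S.T; linarith [hh.1]
  have hlimu := hu'.tendsto.comp hφ
  have hlimv := hv'.tendsto.comp hφ
  have hlim : Tendsto
      (fun h : ℝ => u (ξ.curve (max h 0)) (t - h) - v (ξ.curve (max h 0)) (t - h))
      (𝓝[Ioo 0 t] t) (𝓝 (u (ξ.curve (max t 0)) 0 - v (ξ.curve (max t 0)) 0)) :=
    hlimu.sub hlimv
  haveI : (𝓝[Ioo (0:ℝ) t] t).NeBot := right_nhdsWithin_Ioo_neBot ht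
  have hfin : u x t - v x t - ε ≤ u (ξ.curve (max t 0)) 0 - v (ξ.curve (max t 0)) 0 :=
    ge_of_tendsto hlim (eventually_nhdsWithin_of_forall key)
  have hMx := hM (ξ.curve (max t 0))
  linarith
end

section
/- Assume (A1)–(A6). Any two solutions of the initial value problem u_t + H(x,|Du|) = 0 in X × (0,T) with u|_{t=0} = u₀ coincide; in particular, the value function U is the unique solution (in the sense of sub/supersolutions via optimality principles). -/
open Set Filter MeasureTheory

variable {X : Type*} [MetricSpace X]

open Topology in
private lemma speed_bound {m : ℝ → ℝ} (hm : PwConstIci m) : ∃ B, ∀ x, 0 ≤ x → m x ≤ B := by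
  obtain ⟨n, r, hr0, hlt, hconst, hconst'⟩ := hm
  refine ⟨(Finset.range (n + 1)).sup' ⟨0, Finset.mem_range.mpr (Nat.succ_pos n)⟩ (fun i => m (r i)), ?_⟩
  intro x hx
  rcases le_or_gt (r n) x with hn | hn
  · have hx' : m x = m (r n) := hconst' x (Set.mem_Ici.mpr hn) (r n) (Set.mem_Ici.mpr le_rfl)
    rw [hx']
    exact Finset.le_sup' (fun i => m (r i)) (Finset.self_mem_range_succ n)
  · -- find the piece containing x
    have hx0 : r 0 ≤ x := by rw [hr0]; exact hx
    set s : Finset ℕ := (Finset.range (n + 1)).filter (fun i => r i ≤ x) with hs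
    have hs0 : 0 ∈ s := by simp [hs, hx0]
    have hsne : s.Nonempty := ⟨0, hs0⟩
    set i := s.max' hsne with hi
    have hiin : i ∈ s := s.max'_mem hsne
    have hile : i ≤ n := by
      have := (Finset.mem_filter.mp hiin).1
      simpa [Nat.lt_succ_iff] using Finset.mem_range.mp this
    have hrix : r i ≤ x := (Finset.mem_filter.mp hiin).2
    have hine : i ≠ n := by
      intro h; rw [h] at hrix; linarith
    have hiltn : i < n := lt_of_le_of_ne hile hine
    have hxlt : x < r (i + 1) := by
      by_contra hcon
      push_neg at hcon
      have hmem : i + 1 ∈ s := by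
        simp only [hs, Finset.mem_filter, Finset.mem_range]
        exact ⟨by omega, hcon⟩
      have := s.le_max' (i + 1) hmem
      omega
    have hx' : m x = m (r i) :=
      hconst i hiltn x ⟨hrix, hxlt⟩ (r i) ⟨le_rfl, hlt i hiltn⟩
    rw [hx']
    exact Finset.le_sup' (fun i => m (r i)) (Finset.mem_range.mpr (Nat.lt_succ_of_le hile))

open Topology in
private lemma admissible_ac {X : Type*} [MetricSpace X] (L : X → ℝ → EReal)
    (ξ : AdmissibleCurve X L) : IsACCurve (fun s => ξ.curve (max s 0)) := by
  obtain ⟨B, hB⟩ := speed_bound ξ.speed_pw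
  have hB0 : 0 ≤ B := le_trans (ξ.speed_nonneg 0) (hB 0 le_rfl)
  refine ⟨fun _ => B, fun _ => hB0, locallyIntegrable_const B, ?_⟩
  intro a b hab
  set a' := max a 0 with ha'
  set b' := max b 0 with hb'
  have ha'b' : a' ≤ b' := max_le_max hab le_rfl
  have hdiff : b' - a' ≤ b - a := by
    rcases le_or_gt b 0 with hb0 | hb0
    · have h1 : b' = 0 := max_eq_right hb0
      have h2 : a' = 0 := max_eq_right (hab.trans hb0)
      rw [h1, h2]; linarith
    · have h1 : b' = b := max_eq_left hb0.le
      have h2 : a ≤ a' := le_max_left a 0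
      rw [h1]; linarith
  have h1 : dist (ξ.curve a') (ξ.curve b') ≤ ∫ r in a'..b', ξ.speed r :=
    ξ.abs_cont a' b' (le_max_right a 0) ha'b'
  have h2 : (∫ r in a'..b', ξ.speed r) ≤ B * (b - a) := by
    by_cases hi : IntervalIntegrable ξ.speed volume a' b'
    · calc (∫ r in a'..b', ξ.speed r) ≤ ∫ _ in a'..b', B := by
            refine intervalIntegral.integral_mono_on ha'b' hi (intervalIntegrable_const) ?_
            intro y hy
            exact hB y (le_trans (le_max_right a 0) hy.1)
        _ = (b' - a') * B := by
            rw [intervalIntegral.integral_const]; ring_nf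
        _ ≤ B * (b - a) := by nlinarith
    · rw [intervalIntegral.integral_undef hi]
      have : 0 ≤ b - a := by linarith
      positivity
  calc dist (ξ.curve a') (ξ.curve b') ≤ ∫ r in a'..b', ξ.speed r := h1
    _ ≤ B * (b - a) := h2
    _ = ∫ _ in a..b, B := by rw [intervalIntegral.integral_const, smul_eq_mul]; ring

open Topology in
private lemma comp_le {X : Type*} [MetricSpace X] (S : HJSetup X) (u₁ u₂ : X → ℝ → ℝ)
    (h₁_cont : ArcwiseContinuousOn u₁ S.T) (h₁_init : ∀ x, u₁ x 0 = S.u₀ x)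
    (h₂_cont : ArcwiseContinuousOn u₂ S.T) (h₂_init : ∀ x, u₂ x 0 = S.u₀ x)
    (h₁_sup : Superoptimal S u₁) (h₂_sub : Suboptimal S u₂)
    (x : X) (t : ℝ) (ht : 0 < t) (htT : t < S.T) : u₂ x t ≤ u₁ x t := by
  refine le_of_forall_pos_le_add ?_
  intro ε hε
  obtain ⟨ξ, hξ0, hξ⟩ := h₁_sup x t ht htT ε hε
  set ζ : ℝ → X := fun s => ξ.curve (max s 0) with hζ
  have hAC : IsACCurve ζ := admissible_ac S.L ξ
  have hc₁ := h₁_cont ζ hAC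
  have hc₂ := h₂_cont ζ hAC
  haveI hne : (𝓝[Ico (0:ℝ) t] t).NeBot := by
    apply mem_closure_iff_nhdsWithin_neBot.mp
    rw [closure_Ico ht.ne]
    exact ⟨ht.le, le_rfl⟩
  have hmem : ((t, 0) : ℝ × ℝ) ∈ (univ : Set ℝ) ×ˢ Ico 0 S.T :=
    ⟨mem_univ _, le_rfl, S.hT⟩
  have hmap : Tendsto (fun h : ℝ => (h, t - h)) (𝓝[Ico (0:ℝ) t] t)
      (𝓝[(univ : Set ℝ) ×ˢ Ico 0 S.T] (t, 0)) := by
    apply tendsto_nhdsWithin_of_tendsto_nhds_of_eventually_within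
    · have h0 : Tendsto (fun h : ℝ => (h, t - h)) (𝓝 t) (𝓝 (t, t - t)) :=
        (continuous_id.prodMk (continuous_const.sub continuous_id)).tendsto t
      rw [sub_self] at h0
      exact h0.mono_left nhdsWithin_le_nhds
    · filter_upwards [self_mem_nhdsWithin] with h hh
      obtain ⟨hh1, hh2⟩ := hh
      exact ⟨mem_univ _, show (0:ℝ) ≤ t - h by linarith, show t - h < S.T by linarith⟩
  have hlim₁ : Tendsto (fun h : ℝ => u₁ (ζ h) (t - h)) (𝓝[Ico (0:ℝ) t] t)
      (𝓝 (u₁ (ζ t) 0)) := Filter.Tendsto.comp (hc₁ (t, 0) hmem) hmap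
  have hlim₂ : Tendsto (fun h : ℝ => u₂ (ζ h) (t - h)) (𝓝[Ico (0:ℝ) t] t)
      (𝓝 (u₂ (ζ t) 0)) := Filter.Tendsto.comp (hc₂ (t, 0) hmem) hmap
  have hval : u₁ (ζ t) 0 = u₂ (ζ t) 0 := by rw [h₁_init, h₂_init]
  have hD : Tendsto (fun h : ℝ => u₂ x t - u₂ (ζ h) (t - h) + u₁ (ζ h) (t - h))
      (𝓝[Ico (0:ℝ) t] t) (𝓝 (u₂ x t)) := by
    have h3 : Tendsto (fun h : ℝ => u₂ x t - u₂ (ζ h) (t - h) + u₁ (ζ h) (t - h))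
        (𝓝[Ico (0:ℝ) t] t) (𝓝 (u₂ x t - u₂ (ζ t) 0 + u₁ (ζ t) 0)) :=
      ((tendsto_const_nhds (α := ℝ) (f := 𝓝[Ico (0:ℝ) t] t) (x := u₂ x t)).sub hlim₂).add hlim₁
    simpa [hval] using h3
  have hev : ∀ᶠ h in 𝓝[Ico (0:ℝ) t] t,
      u₂ x t - u₂ (ζ h) (t - h) + u₁ (ζ h) (t - h) ≤ u₁ x t + ε := by
    filter_upwards [self_mem_nhdsWithin] with h hh
    have hζh : ζ h = ξ.curve h := by rw [hζ]; simp [max_eq_left hh.1]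
    have h1 := hξ h hh.1 hh.2
    have h2 := h₂_sub x t ht htT ξ hξ0 h hh.1 hh.2
    rw [hζh]
    linarith
  exact le_of_tendsto hD hev


/-- **uniqueness.** Under (A1)–(A6), any two solutions of the initial value
problem (arcwise continuous functions on `X × [0,T)` that are both subsolutions and
supersolutions, i.e. satisfy both the sub- and superoptimality principles, and attain the
initial datum `u₀` at `t = 0`) coincide on `X × [0,T)`; in particular the value function is
the unique solution. -/
theorem stmt18 (S : HJSetup X) (u₁ u₂ : X → ℝ → ℝ)
    (h₁_cont : ArcwiseContinuousOn u₁ S.T)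
    (h₁_sub : Suboptimal S u₁) (h₁_sup : Superoptimal S u₁)
    (h₁_init : ∀ x, u₁ x 0 = S.u₀ x)
    (h₂_cont : ArcwiseContinuousOn u₂ S.T)
    (h₂_sub : Suboptimal S u₂) (h₂_sup : Superoptimal S u₂)
    (h₂_init : ∀ x, u₂ x 0 = S.u₀ x) :
    ∀ (x : X) (t : ℝ), 0 ≤ t → t < S.T → u₁ x t = u₂ x t := by
  intro x t ht htT
  rcases eq_or_lt_of_le ht with h0 | h0
  · rw [← h0, h₁_init, h₂_init]
  · exact le_antisymm
      (comp_le S u₂ u₁ h₂_cont h₂_init h₁_cont h₁_init h₂_sup h₁_sub x t h0 htT)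
      (comp_le S u₁ u₂ h₁_cont h₁_init h₂_cont h₂_init h₁_sup h₂_sub x t h0 htT)
end
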